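/- Let C, D be ℂ-linear categories with finite-dimensional Hom spaces and Serre functors S_C, S_D respectively. Let F : C → D be a functor with left adjoint G. Then F also admits a right adjoint, namely S_C ∘ G ∘ S_D^{-1}. -/

import Mathlib

open CategoryTheory

/-- A Serre functor on a `ℂ`-linear category `C`: an autoequivalence `S` together with
bifunctorial isomorphisms `Hom(A,B) ≅ Hom(B, S A)*` (dual vector space), natural in
both variables. -/
structure SerreFunctor (C : Type*) [Category C] [Preadditive C] [Linear ℂ C] where
  S : C ⥤ C
  additive : S.Additive
  equiv : S.IsEquivalence
  σ : ∀ A B : C, (A ⟶ B) ≃ₗ[ℂ] Module.Dual ℂ (B ⟶ S.obj A)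
  nat_left : ∀ {A' A B : C} (f : A' ⟶ A) (h : A ⟶ B) (k : B ⟶ S.obj A'),
    σ A' B (f ≫ h) k = σ A B h (k ≫ S.map f)
  nat_right : ∀ {A B B' : C} (h : A ⟶ B) (g : B ⟶ B') (k : B' ⟶ S.obj A),
    σ A B' (h ≫ g) k = σ A B h (g ≫ k)

/-!
Both `Hom(F c, S_D d)` and `Hom(c, S_C G d)` are preduals of the same space:
`Hom(F c, S_D d)* ≅ Hom(d, F c) ≅ Hom(G d, c) ≅ Hom(c, S_C G d)*`, naturally in `c` and `d`,
by Serre duality in `D`, the adjunction and Serre duality in `C`. Hom spaces being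
finite-dimensional, hence reflexive, this yields a natural isomorphism
`Hom(F c, S_D d) ≅ Hom(c, S_C G d)`, and substituting `S_D⁻¹ d` for `d` exhibits
`S_C ∘ G ∘ S_D⁻¹` as a right adjoint of `F`.
-/

open Module

namespace LinearEquiv

variable {R M N : Type*} [CommSemiring R] [AddCommMonoid M] [Module R M] [AddCommMonoid N]
  [Module R N]
  [IsReflexive R M] [IsReflexive R N]

noncomputable def predual (e : Dual R M ≃ₗ[R] Dual R N) : N ≃ₗ[R] M :=
  evalEquiv R N ≪≫ₗ e.dualMap ≪≫ₗ (evalEquiv R M).symm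

@[simp]
theorem apply_predual (e : Dual R M ≃ₗ[R] Dual R N) (φ : Dual R M) (n : N) :
    φ (e.predual n) = e φ n := by
  simp [predual]

end LinearEquiv

def CategoryTheory.Adjunction.homLinearEquiv {R C D : Type*} [Semiring R] [Category C]
    [Category D] [Preadditive C] [Preadditive D] [Linear R C] [Linear R D]
    {L : D ⥤ C} {F : C ⥤ D} [F.Additive] [F.Linear R] (adj : L ⊣ F) (X : D) (Y : C) :
    (L.obj X ⟶ Y) ≃ₗ[R] (X ⟶ F.obj Y) :=
  { adj.homEquiv X Y with
    map_add' _ _ := by simp [Adjunction.homEquiv_unit]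
    map_smul' _ _ := by simp [Adjunction.homEquiv_unit] }

namespace SerreFunctor

variable {C D : Type*} [Category C] [Category D] [Preadditive C] [Preadditive D]
  [Linear ℂ C] [Linear ℂ D]

theorem hom_ext (S : SerreFunctor C) {A B : C} {x y : B ⟶ S.S.obj A}
    (h : ∀ g : A ⟶ B, S.σ A B g x = S.σ A B g y) : x = y :=
  eval_apply_injective ℂ <| LinearMap.ext fun φ => by
    simpa using h ((S.σ A B).symm φ)

noncomputable def equivalence (S : SerreFunctor C) : C ≌ C :=
  @Functor.asEquivalence _ _ _ _ S.S S.equiv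

noncomputable def objInvIso (S : SerreFunctor C) (X : C) :
    S.S.obj (S.equivalence.inverse.obj X) ≅ X :=
  S.equivalence.counitIso.app X

theorem objInvIso_inv_naturality (S : SerreFunctor C) {X Y : C} (f : X ⟶ Y) :
    f ≫ (S.objInvIso Y).inv = (S.objInvIso X).inv ≫ S.S.map (S.equivalence.inverse.map f) :=
  S.equivalence.counitIso.inv.naturality f

variable [∀ A B : C, FiniteDimensional ℂ (A ⟶ B)] [∀ A B : D, FiniteDimensional ℂ (A ⟶ B)]
  (SC : SerreFunctor C) (SD : SerreFunctor D)
  {F : C ⥤ D} [F.Additive] [F.Linear ℂ] {G : D ⥤ C} (adj : G ⊣ F)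

noncomputable def adjointHomEquiv (c : C) (d : D) :
    (F.obj c ⟶ SD.S.obj d) ≃ₗ[ℂ] (c ⟶ SC.S.obj (G.obj d)) :=
  ((SC.σ (G.obj d) c).symm ≪≫ₗ adj.homLinearEquiv d c ≪≫ₗ SD.σ d (F.obj c)).predual

theorem σ_adjointHomEquiv {c : C} {d : D} (g : G.obj d ⟶ c) (a : F.obj c ⟶ SD.S.obj d) :
    SC.σ _ _ g (adjointHomEquiv SC SD adj c d a) = SD.σ _ _ (adj.homEquiv d c g) a := by
  simp [adjointHomEquiv, Adjunction.homLinearEquiv]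

theorem adjointHomEquiv_naturality_left {c' c : C} {d : D} (f : c' ⟶ c)
    (a : F.obj c ⟶ SD.S.obj d) :
    adjointHomEquiv SC SD adj c' d (F.map f ≫ a) = f ≫ adjointHomEquiv SC SD adj c d a := by
  refine SC.hom_ext fun g => ?_
  rw [← SC.nat_right, σ_adjointHomEquiv, σ_adjointHomEquiv,
    Adjunction.homEquiv_naturality_right, SD.nat_right]

theorem adjointHomEquiv_naturality_right {c : C} {d d' : D} (m : d ⟶ d')
    (a : F.obj c ⟶ SD.S.obj d) :
    adjointHomEquiv SC SD adj c d' (a ≫ SD.S.map m) =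
      adjointHomEquiv SC SD adj c d a ≫ SC.S.map (G.map m) := by
  refine SC.hom_ext fun g => ?_
  rw [← SC.nat_left, σ_adjointHomEquiv, σ_adjointHomEquiv,
    Adjunction.homEquiv_naturality_left, SD.nat_left]

variable (G) in
noncomputable def rightAdjoint : D ⥤ C :=
  SD.equivalence.inverse ⋙ G ⋙ SC.S

noncomputable def rightAdjointHomEquiv (c : C) (d : D) :
    (F.obj c ⟶ d) ≃ (c ⟶ (rightAdjoint SC SD G).obj d) :=
  (SD.objInvIso d).symm.homToEquiv.trans (adjointHomEquiv SC SD adj c _).toEquiv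

theorem rightAdjointHomEquiv_apply {c : C} {d : D} (a : F.obj c ⟶ d) :
    rightAdjointHomEquiv SC SD adj c d a =
      adjointHomEquiv SC SD adj c _ (a ≫ (SD.objInvIso d).inv) :=
  rfl

theorem rightAdjointHomEquiv_naturality_left {c' c : C} {d : D} (f : c' ⟶ c)
    (a : F.obj c ⟶ d) :
    rightAdjointHomEquiv SC SD adj c' d (F.map f ≫ a) =
      f ≫ rightAdjointHomEquiv SC SD adj c d a := by
  rw [rightAdjointHomEquiv_apply, rightAdjointHomEquiv_apply, Category.assoc,
    adjointHomEquiv_naturality_left]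
  rfl

theorem rightAdjointHomEquiv_naturality_right {c : C} {d d' : D} (a : F.obj c ⟶ d)
    (m : d ⟶ d') :
    rightAdjointHomEquiv SC SD adj c d' (a ≫ m) =
      rightAdjointHomEquiv SC SD adj c d a ≫ (rightAdjoint SC SD G).map m := by
  rw [rightAdjointHomEquiv_apply, rightAdjointHomEquiv_apply, Category.assoc,
    objInvIso_inv_naturality, ← Category.assoc, adjointHomEquiv_naturality_right]
  rfl

noncomputable def adjunction : F ⊣ rightAdjoint SC SD G :=
  Adjunction.mkOfHomEquiv
    { homEquiv := rightAdjointHomEquiv SC SD adj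
      homEquiv_naturality_left_symm := fun f g => by
        rw [Equiv.symm_apply_eq, rightAdjointHomEquiv_naturality_left, Equiv.apply_symm_apply]
      homEquiv_naturality_right := rightAdjointHomEquiv_naturality_right SC SD adj }

variable (G) in
noncomputable def rightAdjointCompIso : SD.S ⋙ rightAdjoint SC SD G ≅ G ⋙ SC.S :=
  SD.equivalence.funInvIdAssoc _

end SerreFunctor

-- `R = S_C ∘ G ∘ S_D⁻¹` is expressed by `S_D ⋙ R ≅ G ⋙ S_C`.
theorem stmt12 {C D : Type*} [Category C] [Category D] [Preadditive C] [Preadditive D]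
    [Linear ℂ C] [Linear ℂ D]
    [∀ A B : C, FiniteDimensional ℂ (A ⟶ B)] [∀ A B : D, FiniteDimensional ℂ (A ⟶ B)]
    (SC : SerreFunctor C) (SD : SerreFunctor D)
    (F : C ⥤ D) [F.Additive] [F.Linear ℂ] (G : D ⥤ C) (adj : G ⊣ F) :
    ∃ R : D ⥤ C, Nonempty (F ⊣ R) ∧ Nonempty (SD.S ⋙ R ≅ G ⋙ SC.S) :=
  ⟨_, ⟨SC.adjunction SD adj⟩, ⟨SC.rightAdjointCompIso SD G⟩⟩
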